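/- arXiv:1705.07806 — 3 statements merged into one kernel-verified Lean document; each statement's English description precedes it below -/
import Mathlib

section
/- Let V₁,…,V_J be finite-dimensional inner product spaces with linear maps Π_j : V_j → V such that V = Σ_j Π_j V_j. Let A_j be symmetric positive semidefinite on V_j, D_j SPD on V_j, and V_j^c ⊂ V_j subspaces with N(A_j) ⊂ V_j^c. Let Q_j : V_j → V_j^c be the D_j-orthogonal projection and define μ_j^{-1} = max_{v_j∈V_j} min_{v_j^c∈V_j^c} ‖v_j − v_j^c‖²_{D_j}/‖v_j‖²_{A_j} and μ_c = min_j μ_j. Assume: (1) ‖Σ_j Π_j w_j‖²_D ≤ C_{p,2} Σ_j ‖w_j‖²_{D_j} for all (w_j); (2) every w ∈ V admits a decomposition w = Σ_j Π_j w_j with Σ_j ‖w_j‖²_{A_j} ≤ C_{p,1} ‖w‖²_A. Then for the coarse space V_c = Σ_j Π_j V_j^c, every v ∈ V satisfies min_{v_c∈V_c} ‖v − v_c‖²_D ≤ C_{p,1} C_{p,2} μ_c^{-1} ‖v‖²_A. -/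
open Finset Matrix

/-! Decompose `v = Σ_j Π_j w_j` stably in energy, replace each `w_j` by its best local coarse
approximation `w_j^c`, and take `v_c = Σ_j Π_j w_j^c`. The `D`-stability of `Π` bounds
`‖v - v_c‖²_D` by `C_{p,2} Σ_j ‖w_j - w_j^c‖²_{D_j}`, each local error is at most
`μ_c⁻¹ ‖w_j‖²_{A_j}`, and the stable decomposition bounds `Σ_j ‖w_j‖²_{A_j}` by `C_{p,1} ‖v‖²_A`. -/

theorem Submodule.sum_mem_iSup_map {R ι F : Type*} [Semiring R] [Fintype ι] [AddCommMonoid F]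
    [Module R F] {E : ι → Type*} [∀ i, AddCommMonoid (E i)] [∀ i, Module R (E i)]
    (P : ∀ i, E i →ₗ[R] F) (V : ∀ i, Submodule R (E i))
    {w : ∀ i, E i} (hw : ∀ i, w i ∈ V i) :
    ∑ i, P i (w i) ∈ ⨆ i, (V i).map (P i) :=
  Submodule.sum_mem _ fun i _ =>
    Submodule.mem_iSup_of_mem i (Submodule.mem_map_of_mem (hw i))

theorem exists_mem_iSup_map_le_of_local_approx {ι F : Type*} [Fintype ι]
    [AddCommGroup F] [Module ℝ F] {E : ι → Type*} [∀ i, AddCommGroup (E i)]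
    [∀ i, Module ℝ (E i)] (P : ∀ i, E i →ₗ[ℝ] F) (V : ∀ i, Submodule ℝ (E i))
    (d : F → ℝ) (dloc aloc : ∀ i, E i → ℝ) {μ C : ℝ} (hC : 0 ≤ C)
    (happrox : ∀ i v, ∃ vc ∈ V i, dloc i (v - vc) ≤ μ * aloc i v)
    (hstab : ∀ w : ∀ i, E i, d (∑ i, P i (w i)) ≤ C * ∑ i, dloc i (w i))
    (w : ∀ i, E i) :
    ∃ vc ∈ ⨆ i, (V i).map (P i), d (∑ i, P i (w i) - vc) ≤ C * μ * ∑ i, aloc i (w i) := by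
  choose wc hwc hwc_approx using fun i => happrox i (w i)
  refine ⟨∑ i, P i (wc i), Submodule.sum_mem_iSup_map P V hwc, ?_⟩
  have herr : ∑ i, P i (w i) - ∑ i, P i (wc i) = ∑ i, P i (w i - wc i) := by
    simp only [map_sub, Finset.sum_sub_distrib]
  calc d (∑ i, P i (w i) - ∑ i, P i (wc i))
      ≤ C * ∑ i, dloc i (w i - wc i) := herr ▸ hstab fun i => w i - wc i
    _ ≤ C * ∑ i, μ * aloc i (w i) := by gcongr with i; exact hwc_approx i
    _ = C * μ * ∑ i, aloc i (w i) := by rw [← Finset.mul_sum, mul_assoc]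

theorem local_to_global_coarse_space_general (n J : ℕ) (m : Fin J → ℕ)
    (A D : Matrix (Fin n) (Fin n) ℝ)
    (Aj Dj : ∀ j : Fin J, Matrix (Fin (m j)) (Fin (m j)) ℝ)
    (Pimap : ∀ j : Fin J, (Fin (m j) → ℝ) →ₗ[ℝ] (Fin n → ℝ))
    (Vjc : ∀ j : Fin J, Submodule ℝ (Fin (m j) → ℝ))
    (μc C1 C2 : ℝ) (hμc : 0 < μc) (hC2 : 0 ≤ C2)
    (happrox : ∀ j (v : Fin (m j) → ℝ), ∃ vc ∈ Vjc j,
      (v - vc) ⬝ᵥ (Dj j).mulVec (v - vc) ≤ μc⁻¹ * (v ⬝ᵥ (Aj j).mulVec v))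
    (hC2stab : ∀ w : (j : Fin J) → (Fin (m j) → ℝ),
      (∑ j, Pimap j (w j)) ⬝ᵥ D.mulVec (∑ j, Pimap j (w j)) ≤
        C2 * ∑ j, (w j) ⬝ᵥ (Dj j).mulVec (w j))
    (hC1dec : ∀ v : Fin n → ℝ, ∃ w : (j : Fin J) → (Fin (m j) → ℝ),
      v = (∑ j, Pimap j (w j)) ∧
      (∑ j, (w j) ⬝ᵥ (Aj j).mulVec (w j)) ≤ C1 * (v ⬝ᵥ A.mulVec v)) :
    ∀ v : Fin n → ℝ, ∃ vc ∈ (⨆ j, (Vjc j).map (Pimap j)),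
      (v - vc) ⬝ᵥ D.mulVec (v - vc) ≤ C1 * C2 * μc⁻¹ * (v ⬝ᵥ A.mulVec v) := by
  intro v
  obtain ⟨w, rfl, hwA⟩ := hC1dec v
  obtain ⟨vc, hvc, hvc_err⟩ := exists_mem_iSup_map_le_of_local_approx Pimap Vjc
    (fun x => x ⬝ᵥ D *ᵥ x) (fun j x => x ⬝ᵥ Dj j *ᵥ x) (fun j x => x ⬝ᵥ Aj j *ᵥ x)
    hC2 happrox hC2stab w
  refine ⟨vc, hvc, hvc_err.trans ?_⟩
  calc _ ≤ C2 * μc⁻¹ * (C1 * _) :=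
        mul_le_mul_of_nonneg_left hwA (mul_nonneg hC2 (inv_nonneg.mpr hμc.le))
    _ = _ := by ring

/-- Abstract local-to-global coarse space construction. Given auxiliary
spaces `V_j = ℝ^{m j}` with transfer maps `Π_j`, local PSD operators `A_j`, local SPD
operators `D_j`, local coarse spaces `V_j^c ⊇ N(A_j)` with uniform local approximation
constant `μ_c`, a `D`-stability bound `C_{p,2}` for `Π`, and a stable decomposition
with constant `C_{p,1}`, the global coarse space `V_c = Σ_j Π_j V_j^c` satisfies
`min_{v_c ∈ V_c} ‖v - v_c‖²_D ≤ C_{p,1} C_{p,2} μ_c⁻¹ ‖v‖²_A` for all `v`. -/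
theorem local_to_global_coarse_space (n J : ℕ) (m : Fin J → ℕ)
    (A D : Matrix (Fin n) (Fin n) ℝ) (hA : A.PosDef) (hD : D.PosDef)
    (Aj Dj : ∀ j : Fin J, Matrix (Fin (m j)) (Fin (m j)) ℝ)
    (hAj : ∀ j, (Aj j).PosSemidef) (hDj : ∀ j, (Dj j).PosDef)
    (Pimap : ∀ j : Fin J, (Fin (m j) → ℝ) →ₗ[ℝ] (Fin n → ℝ))
    (Vjc : ∀ j : Fin J, Submodule ℝ (Fin (m j) → ℝ))
    (hker : ∀ j (v : Fin (m j) → ℝ), (Aj j).mulVec v = 0 → v ∈ Vjc j)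
    (μc C1 C2 : ℝ) (hμc : 0 < μc) (hC1 : 0 ≤ C1) (hC2 : 0 ≤ C2)
    (happrox : ∀ j (v : Fin (m j) → ℝ), ∃ vc ∈ Vjc j,
      (v - vc) ⬝ᵥ (Dj j).mulVec (v - vc) ≤ μc⁻¹ * (v ⬝ᵥ (Aj j).mulVec v))
    (hC2stab : ∀ w : (j : Fin J) → (Fin (m j) → ℝ),
      (∑ j, Pimap j (w j)) ⬝ᵥ D.mulVec (∑ j, Pimap j (w j)) ≤
        C2 * ∑ j, (w j) ⬝ᵥ (Dj j).mulVec (w j))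
    (hC1dec : ∀ v : Fin n → ℝ, ∃ w : (j : Fin J) → (Fin (m j) → ℝ),
      v = (∑ j, Pimap j (w j)) ∧
      (∑ j, (w j) ⬝ᵥ (Aj j).mulVec (w j)) ≤ C1 * (v ⬝ᵥ A.mulVec v)) :
    ∀ v : Fin n → ℝ, ∃ vc ∈ (⨆ j, (Vjc j).map (Pimap j)),
      (v - vc) ⬝ᵥ D.mulVec (v - vc) ≤ C1 * C2 * μc⁻¹ * (v ⬝ᵥ A.mulVec v) :=
  local_to_global_coarse_space_general n J m A D Aj Dj Pimap Vjc μc C1 C2 hμc hC2 happrox hC2stab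
    hC1dec
end

section
/- Under the assumptions of the previous statement plus the smoother bounds ‖v‖²_A ≤ ‖v‖²_{R̄^{-1}} ≤ c^D ‖v‖²_D, the two-level method with exact coarse solve on V_c = Σ_j Π_j V_j^c has convergence rate ‖E‖²_A ≤ 1 − μ_c/(C_{p,1} C_{p,2} c^D). -/
open Finset Matrix

/-!
Split `v = Σ_j Π_j w_j` stably in energy and approximate each `w_j` locally by
`w_j^c ∈ V_j^c`. The error `Σ_j Π_j (w_j - w_j^c)` is bounded in the `D`-norm by stability
of the splitting, hence in the `R̄⁻¹`-norm via `c^D`, so `C_{p,1} C_{p,2} c^D / μ_c` is an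
admissible constant in the definition of `K(V_c)`. Minimality of `K(V_c)` and the identity
`‖E‖²_A = 1 - 1/K(V_c)` then give the rate.
-/

section CoarseSpace

variable {ι E : Type*} [Fintype ι] [AddCommGroup E] [Module ℝ E]
  {F : ι → Type*} [∀ j, AddCommGroup (F j)] [∀ j, Module ℝ (F j)]

def coarseSpace (P : ∀ j, F j →ₗ[ℝ] E) (Vc : ∀ j, Submodule ℝ (F j)) : Submodule ℝ E :=
  ⨆ j, (Vc j).map (P j)

theorem sum_mem_coarseSpace (P : ∀ j, F j →ₗ[ℝ] E) {Vc : ∀ j, Submodule ℝ (F j)}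
    {w : ∀ j, F j} (hw : ∀ j, w j ∈ Vc j) : ∑ j, P j (w j) ∈ coarseSpace P Vc :=
  Submodule.sum_mem _ fun j _ => Submodule.mem_iSup_of_mem j (Submodule.mem_map_of_mem (hw j))

theorem exists_mem_coarseSpace_approx (P : ∀ j, F j →ₗ[ℝ] E) (Vc : ∀ j, Submodule ℝ (F j))
    (a d : E → ℝ) (aj dj : ∀ j, F j → ℝ) {μ C₁ C₂ : ℝ} (hμ : 0 ≤ μ) (hC₂ : 0 ≤ C₂)
    (happrox : ∀ j v, ∃ vc ∈ Vc j, dj j (v - vc) ≤ μ⁻¹ * aj j v)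
    (hstab : ∀ w : ∀ j, F j, d (∑ j, P j (w j)) ≤ C₂ * ∑ j, dj j (w j))
    (hdec : ∀ v, ∃ w : ∀ j, F j, v = ∑ j, P j (w j) ∧ ∑ j, aj j (w j) ≤ C₁ * a v)
    (v : E) : ∃ vc ∈ coarseSpace P Vc, d (v - vc) ≤ C₁ * C₂ / μ * a v := by
  obtain ⟨w, rfl, hw⟩ := hdec v
  choose wc hwc hwc_approx using fun j => happrox j (w j)
  refine ⟨∑ j, P j (wc j), sum_mem_coarseSpace P hwc, ?_⟩
  have herr : ∑ j, P j (w j) - ∑ j, P j (wc j) = ∑ j, P j (w j - wc j) := by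
    simp only [map_sub, sum_sub_distrib]
  calc d (∑ j, P j (w j) - ∑ j, P j (wc j))
      ≤ C₂ * ∑ j, dj j (w j - wc j) := herr ▸ hstab _
    _ ≤ C₂ * (μ⁻¹ * ∑ j, aj j (w j)) := by
        gcongr
        rw [mul_sum]
        exact sum_le_sum fun j _ => hwc_approx j
    _ ≤ C₂ * (μ⁻¹ * (C₁ * a (∑ j, P j (w j)))) := by gcongr
    _ = C₁ * C₂ / μ * a (∑ j, P j (w j)) := by ring

end CoarseSpace

theorem two_level_convergence_rate_general (n J : ℕ) (m : Fin J → ℕ)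
    (A D : Matrix (Fin n) (Fin n) ℝ)
    (Aj Dj : ∀ j : Fin J, Matrix (Fin (m j)) (Fin (m j)) ℝ)
    (Pimap : ∀ j : Fin J, (Fin (m j) → ℝ) →ₗ[ℝ] (Fin n → ℝ))
    (Vjc : ∀ j : Fin J, Submodule ℝ (Fin (m j) → ℝ))
    (μc C1 C2 : ℝ) (hμc : 0 < μc) (hC2 : 0 < C2)
    (happrox : ∀ j (v : Fin (m j) → ℝ), ∃ vc ∈ Vjc j,
      (v - vc) ⬝ᵥ (Dj j).mulVec (v - vc) ≤ μc⁻¹ * (v ⬝ᵥ (Aj j).mulVec v))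
    (hC2stab : ∀ w : (j : Fin J) → (Fin (m j) → ℝ),
      (∑ j, Pimap j (w j)) ⬝ᵥ D.mulVec (∑ j, Pimap j (w j)) ≤
        C2 * ∑ j, (w j) ⬝ᵥ (Dj j).mulVec (w j))
    (hC1dec : ∀ v : Fin n → ℝ, ∃ w : (j : Fin J) → (Fin (m j) → ℝ),
      v = (∑ j, Pimap j (w j)) ∧
      (∑ j, (w j) ⬝ᵥ (Aj j).mulVec (w j)) ≤ C1 * (v ⬝ᵥ A.mulVec v))
    (qR : (Fin n → ℝ) → ℝ)  -- v ↦ ‖v‖²_{R̄⁻¹}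
    (cD : ℝ) (hcD : 0 < cD)
    (hR : ∀ v, v ⬝ᵥ A.mulVec v ≤ qR v ∧ qR v ≤ cD * (v ⬝ᵥ D.mulVec v))
    (K Esq : ℝ) (hKpos : 0 < K)
    (hK : IsLeast {C : ℝ | ∀ v : Fin n → ℝ, ∃ vc ∈ (⨆ j, (Vjc j).map (Pimap j)),
      qR (v - vc) ≤ C * (v ⬝ᵥ A.mulVec v)} K)
    (hE : Esq = 1 - 1 / K) :
    Esq ≤ 1 - μc / (C1 * C2 * cD) := by
  have hadmissible : C1 * C2 * cD / μc ∈ {C : ℝ | ∀ v : Fin n → ℝ,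
      ∃ vc ∈ (⨆ j, (Vjc j).map (Pimap j)), qR (v - vc) ≤ C * (v ⬝ᵥ A.mulVec v)} := by
    intro v
    obtain ⟨vc, hvc, hD_err⟩ := exists_mem_coarseSpace_approx Pimap Vjc
      (fun v => v ⬝ᵥ A *ᵥ v) (fun v => v ⬝ᵥ D *ᵥ v) (fun j v => v ⬝ᵥ Aj j *ᵥ v)
      (fun j v => v ⬝ᵥ Dj j *ᵥ v) hμc.le hC2.le happrox hC2stab hC1dec v
    refine ⟨vc, hvc, (hR _).2.trans ?_⟩
    calc cD * ((v - vc) ⬝ᵥ D *ᵥ (v - vc)) ≤ cD * (C1 * C2 / μc * (v ⬝ᵥ A *ᵥ v)) := by gcongr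
      _ = C1 * C2 * cD / μc * (v ⬝ᵥ A *ᵥ v) := by ring
  rw [hE, ← one_div_div (C1 * C2 * cD) μc]
  exact sub_le_sub_left (one_div_le_one_div_of_le hKpos (hK.2 hadmissible)) 1

/-- Under the assumptions of the local-to-global coarse space theorem,
together with the smoother bounds `‖v‖²_A ≤ ‖v‖²_{R̄⁻¹} ≤ c^D ‖v‖²_D` and the
two-level identity `‖E‖²_A = 1 - 1/K(V_c)` (with `K(V_c)` the least constant in the
`R̄⁻¹`-approximation inequality for `V_c = Σ_j Π_j V_j^c`), the two-level method
converges with rate `‖E‖²_A ≤ 1 - μ_c/(C_{p,1} C_{p,2} c^D)`. -/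
theorem two_level_convergence_rate (n J : ℕ) (m : Fin J → ℕ)
    (A D : Matrix (Fin n) (Fin n) ℝ) (hA : A.PosDef) (hD : D.PosDef)
    (Aj Dj : ∀ j : Fin J, Matrix (Fin (m j)) (Fin (m j)) ℝ)
    (hAj : ∀ j, (Aj j).PosSemidef) (hDj : ∀ j, (Dj j).PosDef)
    (Pimap : ∀ j : Fin J, (Fin (m j) → ℝ) →ₗ[ℝ] (Fin n → ℝ))
    (Vjc : ∀ j : Fin J, Submodule ℝ (Fin (m j) → ℝ))
    (hker : ∀ j (v : Fin (m j) → ℝ), (Aj j).mulVec v = 0 → v ∈ Vjc j)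
    (μc C1 C2 : ℝ) (hμc : 0 < μc) (hC1 : 0 < C1) (hC2 : 0 < C2)
    (happrox : ∀ j (v : Fin (m j) → ℝ), ∃ vc ∈ Vjc j,
      (v - vc) ⬝ᵥ (Dj j).mulVec (v - vc) ≤ μc⁻¹ * (v ⬝ᵥ (Aj j).mulVec v))
    (hC2stab : ∀ w : (j : Fin J) → (Fin (m j) → ℝ),
      (∑ j, Pimap j (w j)) ⬝ᵥ D.mulVec (∑ j, Pimap j (w j)) ≤
        C2 * ∑ j, (w j) ⬝ᵥ (Dj j).mulVec (w j))
    (hC1dec : ∀ v : Fin n → ℝ, ∃ w : (j : Fin J) → (Fin (m j) → ℝ),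
      v = (∑ j, Pimap j (w j)) ∧
      (∑ j, (w j) ⬝ᵥ (Aj j).mulVec (w j)) ≤ C1 * (v ⬝ᵥ A.mulVec v))
    (qR : (Fin n → ℝ) → ℝ)  -- v ↦ ‖v‖²_{R̄⁻¹}
    (cD : ℝ) (hcD : 0 < cD)
    (hR : ∀ v, v ⬝ᵥ A.mulVec v ≤ qR v ∧ qR v ≤ cD * (v ⬝ᵥ D.mulVec v))
    (K Esq : ℝ) (hKpos : 0 < K)
    (hK : IsLeast {C : ℝ | ∀ v : Fin n → ℝ, ∃ vc ∈ (⨆ j, (Vjc j).map (Pimap j)),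
      qR (v - vc) ≤ C * (v ⬝ᵥ A.mulVec v)} K)
    (hE : Esq = 1 - 1 / K) :
    Esq ≤ 1 - μc / (C1 * C2 * cD) :=
  two_level_convergence_rate_general n J m A D Aj Dj Pimap Vjc μc C1 C2 hμc hC2 happrox hC2stab
    hC1dec qR cD hcD hR K Esq hKpos hK hE
end

section
/- Let A be a symmetric M-matrix on ℝ^n written as (Au,v) = Σ_{e=(i,j)∈E} ω_e (u_i−u_j)(v_i−v_j) with all ω_e = −a_{ij} > 0. For a threshold θ ∈ (0,1) define the strength function s_c(i,j) = a_{ij}/max(min_{k≠i} a_{ik}, min_{k≠j} a_{jk}) and the filtered matrix (A_S u, v) = Σ_{e=(i,j): s_c(i,j) ≥ θ} ω_e (u_i−u_j)(v_i−v_j). Let D, D_S denote the diagonals of A, A_S, and N_i the neighbors of i. Then ‖v‖²_{A_S} ≤ ‖v‖²_A for all v, and ‖v‖²_D ≤ (max_i |N_i|/θ) ‖v‖²_{D_S} for all v; in particular A_S is an M-matrix relative of A. -/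
/-!
Every kept edge carries a nonnegative weight, so dropping edges can only decrease the energy.
For the diagonal bound, let `mᵢ = min_{k ≠ i} a_{ik}`. The entry `a_{ii}` is a sum of `|Nᵢ|` weights,
each at most `-mᵢ`. When `mᵢ < 0`, a neighbour `k` realising the minimum is itself strong: by
symmetry `m_k ≤ a_{ki} = mᵢ`, so `s_c(i,k) = mᵢ / mᵢ = 1 ≥ θ`. Hence `-mᵢ ≤ (D_S)_{ii}`, and
`a_{ii} ≤ |Nᵢ| (D_S)_{ii} ≤ (max |N| / θ) (D_S)_{ii}`.
-/

open Finset Matrix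

namespace Matrix

variable {ι : Type*} [Fintype ι] [DecidableEq ι]

noncomputable def nbrs (A : Matrix ι ι ℝ) (i : ι) : Finset ι :=
  (univ.erase i).filter fun j => A i j ≠ 0

noncomputable def strength (A : Matrix ι ι ℝ) (m : ι → ℝ) (i j : ι) : ℝ :=
  A i j / max (m i) (m j)

noncomputable def strongNbrs (A : Matrix ι ι ℝ) (m : ι → ℝ) (θ : ℝ) (i : ι) : Finset ι :=
  univ.filter fun j => j ≠ i ∧ θ ≤ strength A m i j

variable {A : Matrix ι ι ℝ} {m : ι → ℝ} {θ : ℝ}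

theorem strongNbrs_subset_erase (i : ι) : strongNbrs A m θ i ⊆ univ.erase i :=
  fun j hj => mem_erase.2 ⟨(mem_filter.1 hj).2.1, mem_univ j⟩

theorem neg_nonneg_of_mem_strongNbrs (hoff : ∀ i j, i ≠ j → A i j ≤ 0) {i j : ι}
    (hj : j ∈ strongNbrs A m θ i) : 0 ≤ -A i j :=
  neg_nonneg.2 (hoff i j (mem_filter.1 hj).2.1.symm)

theorem strength_eq_one_of_isLeast (hsym : A.IsSymm)
    (hm : ∀ i, IsLeast ↑((univ.erase i).image (A i)) (m i)) {i k : ι} (hki : k ≠ i)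
    (hAk : A i k = m i) (hneg : m i < 0) : strength A m i k = 1 := by
  have hmk : m k ≤ m i := by
    rw [← hAk, ← hsym.apply i k]
    exact (hm k).2 (mem_image_of_mem _ (mem_erase.2 ⟨hki.symm, mem_univ i⟩))
  rw [strength, max_eq_left hmk, hAk, div_self hneg.ne]

theorem neg_le_sum_strongNbrs (hsym : A.IsSymm) (hoff : ∀ i j, i ≠ j → A i j ≤ 0)
    (hm : ∀ i, IsLeast ↑((univ.erase i).image (A i)) (m i)) (hθ : θ ≤ 1) (i : ι) :
    -m i ≤ ∑ j ∈ strongNbrs A m θ i, -A i j := by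
  by_cases hneg : m i < 0
  · obtain ⟨k, hk, hAk⟩ : ∃ k, k ≠ i ∧ A i k = m i := by simpa using (hm i).1
    have hstrong : k ∈ strongNbrs A m θ i := by
      refine mem_filter.2 ⟨mem_univ k, hk, ?_⟩
      rwa [strength_eq_one_of_isLeast hsym hm hk hAk hneg]
    exact hAk ▸ single_le_sum (fun j => neg_nonneg_of_mem_strongNbrs hoff) hstrong
  · exact (neg_nonpos.2 (not_lt.1 hneg)).trans
      (sum_nonneg fun j => neg_nonneg_of_mem_strongNbrs hoff)

theorem diag_le_card_nbrs_mul_neg (hdiag : ∀ i, A i i = ∑ j ∈ univ.erase i, -A i j)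
    (hm : ∀ i, IsLeast ↑((univ.erase i).image (A i)) (m i)) (i : ι) :
    A i i ≤ #(nbrs A i) * -m i := by
  rw [hdiag i, ← sum_filter_of_ne fun j _ h => neg_ne_zero.1 h, ← nsmul_eq_mul]
  refine sum_le_card_nsmul _ _ _ fun j hj => neg_le_neg ((hm i).2 (mem_image_of_mem _ ?_))
  exact (mem_filter.1 hj).1

theorem diag_le_div_mul_sum_strongNbrs (hsym : A.IsSymm) (hoff : ∀ i j, i ≠ j → A i j ≤ 0)
    (hdiag : ∀ i, A i i = ∑ j ∈ univ.erase i, -A i j)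
    (hm : ∀ i, IsLeast ↑((univ.erase i).image (A i)) (m i)) (hθ₀ : 0 < θ) (hθ₁ : θ ≤ 1)
    {C : ℝ} (hC : ∀ i, (#(nbrs A i) : ℝ) ≤ C) (i : ι) :
    A i i ≤ C / θ * ∑ j ∈ strongNbrs A m θ i, -A i j := by
  have hS : 0 ≤ ∑ j ∈ strongNbrs A m θ i, -A i j :=
    sum_nonneg fun j => neg_nonneg_of_mem_strongNbrs hoff
  calc A i i ≤ #(nbrs A i) * -m i := diag_le_card_nbrs_mul_neg hdiag hm i
    _ ≤ #(nbrs A i) * ∑ j ∈ strongNbrs A m θ i, -A i j := by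
        gcongr
        exact neg_le_sum_strongNbrs hsym hoff hm hθ₁ i
    _ ≤ C * ∑ j ∈ strongNbrs A m θ i, -A i j := by gcongr; exact hC i
    _ ≤ C / θ * ∑ j ∈ strongNbrs A m θ i, -A i j := by
        gcongr
        exact le_div_self ((Nat.cast_nonneg _).trans (hC i)) hθ₀ hθ₁

end Matrix

/-- For a symmetric M-matrix `A` of graph Laplacian type (negative
off-diagonal entries on edges, zero row sums) and a strength threshold `θ ∈ (0,1)`,
the filtered matrix `A_S` (keeping edges with `s_c(i,j) ≥ θ`) satisfies
`‖v‖²_{A_S} ≤ ‖v‖²_A` and `‖v‖²_D ≤ (max_i |N_i|/θ) ‖v‖²_{D_S}`; in particular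
`A_S` is an M-matrix relative of `A`. -/
theorem strength_filtered_m_matrix_relative (n : ℕ) (hn : 2 ≤ n)
    (A : Matrix (Fin n) (Fin n) ℝ) (hsym : A.IsSymm)
    (hoff : ∀ i j, i ≠ j → A i j ≤ 0)
    (hdiag : ∀ i, A i i = ∑ j ∈ Finset.univ.erase i, (-(A i j)))
    (θ : ℝ) (hθ : θ ∈ Set.Ioo (0:ℝ) 1)
    (Nb : Fin n → Finset (Fin n))
    (hNb : ∀ i, Nb i = (Finset.univ.erase i).filter fun j => A i j ≠ 0)
    (minRow : Fin n → ℝ)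
    (hminRow : ∀ i, minRow i = ((Finset.univ.erase i).image fun k => A i k).min'
      (Finset.Nonempty.image (by
        rw [← Finset.card_pos, Finset.card_erase_of_mem (Finset.mem_univ i),
          Finset.card_univ, Fintype.card_fin]
        omega) _))
    (sc : Fin n → Fin n → ℝ)
    (hsc : ∀ i j, sc i j = A i j / max (minRow i) (minRow j))
    (maxN : ℕ) (hmaxN : maxN = Finset.univ.sup fun i => (Nb i).card) :
    (∀ v : Fin n → ℝ,
      (1/2) * (∑ i, ∑ j ∈ Finset.univ.filter (fun j => j ≠ i ∧ θ ≤ sc i j),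
          (-(A i j)) * (v i - v j) ^ 2) ≤
        (1/2) * ∑ i, ∑ j ∈ Finset.univ.erase i, (-(A i j)) * (v i - v j) ^ 2) ∧
    (∀ v : Fin n → ℝ,
      (∑ i, A i i * (v i) ^ 2) ≤
        ((maxN : ℝ) / θ) * ∑ i,
          (∑ j ∈ Finset.univ.filter (fun j => j ≠ i ∧ θ ≤ sc i j), (-(A i j))) *
            (v i) ^ 2) := by
  have hm : ∀ i, IsLeast ↑((univ.erase i).image (A i)) (minRow i) := fun i => by
    rw [hminRow]; exact isLeast_min' _ _
  obtain rfl : sc = strength A minRow := funext₂ hsc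
  obtain rfl : Nb = nbrs A := funext hNb
  have hcard : ∀ i, (#(nbrs A i) : ℝ) ≤ maxN := fun i => by
    rw [hmaxN]; exact_mod_cast le_sup (f := fun i => #(nbrs A i)) (mem_univ i)
  refine ⟨fun v => ?_, fun v => ?_⟩
  · gcongr with i
    · intro j hj _
      exact mul_nonneg (neg_nonneg.2 (hoff i j (ne_of_mem_erase hj).symm)) (sq_nonneg _)
    · exact strongNbrs_subset_erase i
  · rw [mul_sum]
    refine sum_le_sum fun i _ => ?_
    rw [← mul_assoc]
    exact mul_le_mul_of_nonneg_right
      (diag_le_div_mul_sum_strongNbrs hsym hoff hdiag hm hθ.1 hθ.2.le hcard i) (sq_nonneg _)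
end
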